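/- Left distributivity of whiskering over vertical composition: for an n-diagram D, an m-diagram S, and an l-diagram M, all well-defined, with l, n > m > 0, and writing a = min(n,l)−1 and b = min(m, max(n,l))−1 (so b < a), provided the composites exist, S ∘_b (D ∘_a M) = (S ∘_b D) ∘_a (S ∘_b M). -/

import Mathlib

/-!
Data structures for quasistrict higher categories (Bar–Vicary).
A 0-diagram is a single generator; an (n+1)-diagram is a source n-diagram
together with a list of cells, each a generator name with embedding data.
Embedding data between n-diagrams is a list of n heights; composition of
embeddings adds heights at every level, and the lifted embedding `Λ(e,T)`
has the same data as `e`.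
-/

namespace QS

inductive Diagram : Type where
  | base (g : ℕ) : Diagram
  | step (s : Diagram) (c : List (ℕ × List ℕ)) : Diagram

namespace Diagram

/-- Dimension of a diagram. -/
def dim : Diagram → ℕ
  | base _ => 0
  | step s _ => s.dim + 1

/-- The source (n−1)-diagram of an n-diagram (junk at dimension 0). -/
def src : Diagram → Diagram
  | base g => base g
  | step s _ => s

/-- The list of cells: generator names with embedding data. -/
def cells : Diagram → List (ℕ × List ℕ)
  | base _ => []
  | step _ c => c

/-- The length `|D|` of a diagram. -/
def size : Diagram → ℕ
  | base _ => 1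
  | step _ c => c.length

/-- The unique generator of a 0-diagram. -/
def gen : Diagram → ℕ
  | base g => g
  | step _ _ => 0

end Diagram

/-- A signature assigns to each generator name of each dimension `k ≥ 1` a
source and a target (k−1)-diagram. -/
structure Signature where
  gsrc : ℕ → ℕ → Diagram
  gtgt : ℕ → ℕ → Diagram

/-- Data of the composite embedding `f ∘ e`: `(f ∘ e).h = e.h + f.h`
recursively at every level, i.e. pointwise addition of height data. -/
def embComp (f e : List ℕ) : List ℕ := List.zipWith (· + ·) f e

/-- Data of the lifted embedding `Λ(e, T) : T ↪ D⟨e : S → T⟩`: the same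
height data as `e` (`Λ(e,T).h = e.h`, `Λ(e,T).e = e.e`). -/
def liftEmb (e : List ℕ) (_T : Diagram) : List ℕ := e

/-- Data of the identity embedding on an n-diagram: height 0 at every level. -/
def idEmb (n : ℕ) : List ℕ := List.replicate n 0

/-- The rewrite `D⟨e : S → T⟩`: remove the copy of `S` embedded at height
`e.h` and insert `T`, with the embeddings of `T` composed with the lift of
`e.e`. -/
def rewriteDiag (D : Diagram) (e : List ℕ) (S T : Diagram) : Diagram :=
  match D with
  | .base _ => T
  | .step s c =>
      .step s (c.take (e.headD 0)
        ++ T.cells.map (fun x => (x.1, embComp (liftEmb e.tail T) x.2))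
        ++ c.drop (e.headD 0 + S.cells.length))

/-- The slice `D[i].d`, obtained by sequential rewriting from the source. -/
def slice (σ : Signature) (D : Diagram) : ℕ → Diagram
  | 0 => D.src
  | i + 1 =>
      rewriteDiag (slice σ D i) (D.cells.getD i default).2
        (σ.gsrc D.dim (D.cells.getD i default).1)
        (σ.gtgt D.dim (D.cells.getD i default).1)

/-- The target `D.t := D[|D|].d`. -/
def tgt (σ : Signature) (D : Diagram) : Diagram := slice σ D D.cells.length

/-- Iterated source `s^k`. -/
def srcIter : ℕ → Diagram → Diagram
  | 0, D => D
  | k + 1, D => srcIter k D.src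

/-- Iterated target `t^k`. -/
def tgtIter (σ : Signature) : ℕ → Diagram → Diagram
  | 0, D => D
  | k + 1, D => tgtIter σ k (tgt σ D)

/-- Well-definedness of an embedding `e : S ↪ D`: for 0-diagrams the unique
generators agree; otherwise the component embedding is well-defined, the
image is in range, and the generators and embeddings of `S` match those of
`D` at heights shifted by `e.h` (via the lift of `e.e`). -/
def wdEmb (σ : Signature) : List ℕ → Diagram → Diagram → Prop
  | e, .base g, D => e = [] ∧ D.gen = g
  | e, .step Ss Sc, D =>
      e.length = Ss.dim + 1 ∧
      e.headD 0 + Sc.length ≤ D.cells.length ∧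
      wdEmb σ e.tail Ss (slice σ D (e.headD 0)) ∧
      ∀ i < Sc.length,
        (Sc.getD i default).1 = (D.cells.getD (i + e.headD 0) default).1 ∧
        embComp e.tail (Sc.getD i default).2
          = (D.cells.getD (i + e.headD 0) default).2

/-- Auxiliary well-definedness predicate for diagrams, by dimension. -/
def wdAux (σ : Signature) : ℕ → Diagram → Prop
  | 0, _ => True
  | n + 1, D =>
      wdAux σ n D.src ∧
      ∀ i < D.cells.length,
        wdEmb σ (D.cells.getD i default).2
          (σ.gsrc (n + 1) (D.cells.getD i default).1) (slice σ D i) ∧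
        wdAux σ n (slice σ D (i + 1))

/-- Well-definedness of a diagram: the source is well-defined and every
slice exists and is well-defined. -/
def wdDiagram (σ : Signature) (D : Diagram) : Prop := wdAux σ D.dim D

/-- Two n-diagrams are globular when n = 0, or they have equal sources and
equal targets. -/
def globular (σ : Signature) (S T : Diagram) : Prop :=
  match S with
  | .base _ => True
  | .step _ _ => S.src = T.src ∧ tgt σ S = tgt σ T

/-- Vertical composite of two n-diagrams (`S` below `D`): the source of `S`
together with the concatenated cell lists. -/
def vcomp (S D : Diagram) : Diagram :=
  match S with
  | .base g => .base g
  | .step s c => .step s (c ++ D.cells)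

/-- Data of the inclusion embedding `inc(S, D) : D ↪ S ∘ D` of an n-diagram
`D` into its composite with an m-diagram `S` of size `sLen`, `m ≤ n`. -/
def incData (m sLen : ℕ) : ℕ → List ℕ
  | 0 => []
  | k + 1 => if m = k + 1 then sLen :: List.replicate k 0
             else 0 :: incData m sLen k

/-- Composite `S ∘ D` where `S` has dimension ≤ that of `D`: `S` is attached
on the source side of the shared boundary, so the embeddings of the cells of
`D` are composed with the inclusion embeddings. -/
def compL (S D : Diagram) : Diagram :=
  match D with
  | .base g => .base g
  | .step s c =>
      if S.dim = s.dim + 1 then vcomp S D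
      else .step (compL S s)
        (c.map fun x => (x.1, embComp (incData S.dim S.size s.dim) x.2))

/-- Composite `D ∘ X` where `X` has dimension ≤ that of `D`: `X` is attached
on the target side of the shared boundary, so the cell data of `D` is
unchanged and only the deep source changes. -/
def compR (D X : Diagram) : Diagram :=
  match D with
  | .base g => .base g
  | .step s c =>
      if X.dim = s.dim + 1 then vcomp D X
      else .step (compR s X) c

/-- The composite `X ∘ Y` of two diagrams along their unique common
boundary, determined by their dimensions. -/
def comp (X Y : Diagram) : Diagram :=
  if X.dim ≤ Y.dim then compL X Y else compR X Y

/-- The identity (n+1)-diagram on an n-diagram: source `D`, no cells. -/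
def idDiag (D : Diagram) : Diagram := .step D []

/-- Composability of `X ∘ Y`: the matching condition on iterated
sources/targets along the shared boundary. -/
def composable (σ : Signature) (X Y : Diagram) : Prop :=
  if X.dim ≤ Y.dim then tgt σ X = srcIter (Y.dim - X.dim + 1) Y
  else tgtIter σ (X.dim - Y.dim + 1) X = Y.src

/-!
Whiskering by the lower-dimensional `S` (`compL S`) keeps the cell names, rebuilds the deep
source, and shifts every embedding by an inclusion embedding; since embeddings compose by
pointwise addition of heights, these shifts commute with the ones made by `D`. Induction on the
higher-dimensional factor therefore reduces the identity to the level where `D` and `M` have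
equal dimension, where `D ∘ M` is the concatenation of cell lists and whiskering visibly
distributes over it.
-/

namespace Diagram

@[simp]
theorem dim_step (s : Diagram) (c : List (ℕ × List ℕ)) : (step s c).dim = s.dim + 1 := rfl

end Diagram

open Diagram

theorem embComp_left_comm (a b v : List ℕ) :
    embComp a (embComp b v) = embComp b (embComp a v) := by
  induction a generalizing b v with
  | nil => simp [embComp]
  | cons x xs ih =>
    rcases b with _ | ⟨y, ys⟩ <;> rcases v with _ | ⟨z, zs⟩ <;>
      simp_all [embComp, Nat.add_left_comm]

@[simp]
theorem dim_vcomp (S D : Diagram) : (vcomp S D).dim = S.dim := by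
  cases S <;> rfl

@[simp]
theorem dim_compL (S D : Diagram) : (compL S D).dim = D.dim := by
  induction D with
  | base g => rfl
  | step s c ih =>
    rw [compL]
    split_ifs with h
    · rw [dim_vcomp, h, dim_step]
    · rw [dim_step, dim_step, ih]

@[simp]
theorem dim_compR (D X : Diagram) : (compR D X).dim = D.dim := by
  induction D with
  | base g => rfl
  | step s c ih =>
    rw [compR]
    split_ifs
    · rfl
    · rw [dim_step, dim_step, ih]

theorem compL_step_of_ne {S s : Diagram} (c : List (ℕ × List ℕ)) (h : S.dim ≠ s.dim + 1) :
    compL S (step s c) =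
      step (compL S s) (c.map fun x => (x.1, embComp (incData S.dim S.size s.dim) x.2)) := by
  rw [compL, if_neg h]

theorem compR_step_of_ne {X s : Diagram} (c : List (ℕ × List ℕ)) (h : X.dim ≠ s.dim + 1) :
    compR (step s c) X = step (compR s X) c := by
  rw [compR, if_neg h]

theorem compL_of_dim_eq {S D : Diagram} (h : S.dim = D.dim) (hD : 0 < D.dim) :
    compL S D = vcomp S D := by
  cases D with
  | base g => simp [dim] at hD
  | step s c => rw [compL]; exact if_pos h

theorem compR_of_dim_eq {D X : Diagram} (h : D.dim = X.dim) (hD : 0 < D.dim) :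
    compR D X = vcomp D X := by
  cases D with
  | base g => simp [dim] at hD
  | step s c => rw [compR]; exact if_pos h.symm

theorem size_compL_of_ne {S D : Diagram} (h : S.dim ≠ D.dim) : (compL S D).size = D.size := by
  cases D with
  | base g => rfl
  | step s c => simp [compL_step_of_ne c h, size]

theorem compL_vcomp {S D T : Diagram} (h : S.dim ≠ D.dim) (hDT : D.dim = T.dim) :
    compL S (vcomp D T) = vcomp (compL S D) (compL S T) := by
  cases D with
  | base g => rfl
  | step ds dc =>
    cases T with
    | base g => simp [dim] at hDT
    | step ts tc =>
      have hts : ts.dim = ds.dim := by simpa using hDT.symm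
      have hT : S.dim ≠ ts.dim + 1 := by rw [hts]; exact h
      simp only [vcomp, compL_step_of_ne _ h, compL_step_of_ne _ hT, cells, List.map_append,
        hts]

theorem compL_compL_distrib {S D T : Diagram} (hSD : S.dim < D.dim) (hDT : D.dim ≤ T.dim) :
    compL S (compL D T) = compL (compL S D) (compL S T) := by
  induction T with
  | base g => simp [dim] at hDT; omega
  | step ts tc ih =>
    by_cases heq : D.dim = ts.dim + 1
    · have hDT' : D.dim = (step ts tc).dim := heq
      rw [compL_of_dim_eq (S := D) hDT' (by simp),
        compL_of_dim_eq (S := compL S D) (D := compL S (step ts tc))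
          (by simpa using hDT') (by simp),
        compL_vcomp hSD.ne hDT']
    · have hS : S.dim ≠ ts.dim + 1 := by simp at hDT; omega
      rw [compL_step_of_ne tc heq, compL_step_of_ne _ (by simpa using hS), compL_step_of_ne tc hS,
        compL_step_of_ne _ (by simpa using heq), ih (by simp at hDT; omega),
        size_compL_of_ne hSD.ne]
      simp only [List.map_map, Function.comp_def, dim_compL, embComp_left_comm]

theorem compL_compR_distrib {S D M : Diagram} (hSM : S.dim < M.dim) (hMD : M.dim ≤ D.dim) :
    compL S (compR D M) = compR (compL S D) (compL S M) := by
  induction D with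
  | base g => simp [dim] at hMD; omega
  | step ds dc ih =>
    by_cases heq : M.dim = ds.dim + 1
    · have hDM : (step ds dc).dim = M.dim := heq.symm
      rw [compR_of_dim_eq hDM (by simp),
        compR_of_dim_eq (D := compL S (step ds dc)) (by simpa using hDM) (by simp),
        compL_vcomp (by omega) hDM]
    · have hS : S.dim ≠ ds.dim + 1 := by simp at hMD; omega
      rw [compR_step_of_ne dc heq, compL_step_of_ne _ (by simpa using hS), compL_step_of_ne dc hS,
        compR_step_of_ne _ (by simpa using heq), ih (by simp at hMD; omega), dim_compR]

theorem comp_of_dim_le {X Y : Diagram} (h : X.dim ≤ Y.dim) : comp X Y = compL X Y := if_pos h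

theorem comp_of_dim_lt {X Y : Diagram} (h : Y.dim < X.dim) : comp X Y = compR X Y :=
  if_neg (not_le.mpr h)

theorem comp_distrib_general (D S M : Diagram)
    (hn : S.dim < D.dim) (hl : S.dim < M.dim) :
    comp S (comp D M) = comp (comp S D) (comp S M) := by
  rw [comp_of_dim_le hn.le, comp_of_dim_le hl.le]
  rcases le_or_gt D.dim M.dim with hDM | hMD
  · rw [comp_of_dim_le hDM, comp_of_dim_le (by simpa using hl.le),
      comp_of_dim_le (by simpa using hDM)]
    exact compL_compL_distrib hn hDM
  · rw [comp_of_dim_lt hMD, comp_of_dim_le (by simpa using hn.le),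
      comp_of_dim_lt (by simpa using hMD)]
    exact compL_compR_distrib hl hMD.le

/-- **Distributive diagram composition.**  For an n-diagram `D`, an m-diagram
`S` and an l-diagram `M`, all well-defined, with `l, n > m > 0`, provided
the composites exist, `S ∘_b (D ∘_a M) = (S ∘_b D) ∘_a (S ∘_b M)`, where
`a = min(n,l) − 1` and `b = min(m, max(n,l)) − 1` are determined by the
dimensions (so each `∘` below is the unique composition of its two
arguments). -/
theorem comp_distrib (σ : Signature) (D S M : Diagram)
    (hm : 0 < S.dim) (hn : S.dim < D.dim) (hl : S.dim < M.dim)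
    (hD : wdDiagram σ D) (hS : wdDiagram σ S) (hM : wdDiagram σ M)
    (hDM : composable σ D M) (hSD : composable σ S D)
    (hSM : composable σ S M) :
    comp S (comp D M) = comp (comp S D) (comp S M) :=
  comp_distrib_general D S M hn hl

end QS
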